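/- Let (M, ·, α) be a Hom-Malcev superalgebra over a field K of characteristic 0. Then for all homogeneous w, x, y, z: 2G(w,x,y,z) - α²(w)·J̃(x,y,z) + (-1)^{|x||w|} α²(x)·J̃(w,y,z) - (-1)^{(|y|+|z|)(|x|+|w|)} α²(y)·J̃(z,w,x) + (-1)^{|z|(|x|+|y|+|w|)} α²(z)·J̃(w,x,y) = J̃(w·x,α(y),α(z)) + (-1)^{(|x|+|w|)(|y|+|z|)} J̃(y·z,α(w),α(x)). -/

import Mathlib

/-- The sign `(-1)^i` associated to a parity `i : ZMod 2`. -/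
def sgn (K : Type*) [Field K] (i : ZMod 2) : K := (-1 : K) ^ i.val

/-- The Hom-superJacobian of elements `x, y, z` of parities `px, py, pz`:
`J̃(x,y,z) = (x·y)·α(z) + (-1)^{px(py+pz)} (y·z)·α(x) + (-1)^{pz(px+py)} (z·x)·α(y)`. -/
def homSuperJacobian {K M : Type*} [Field K] [AddCommGroup M] [Module K M]
    (mul : M →ₗ[K] M →ₗ[K] M) (α : M →ₗ[K] M)
    (px py pz : ZMod 2) (x y z : M) : M :=
  mul (mul x y) (α z) + sgn K (px * (py + pz)) • mul (mul y z) (α x)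
    + sgn K (pz * (px + py)) • mul (mul z x) (α y)

/-- The map `G(w,x,y,z) = J̃(w·x,α(y),α(z)) - (-1)^{px pw} α²(x)·J̃(w,y,z)
    - (-1)^{pw(px+py+pz)} J̃(x,y,z)·α²(w)` for elements of parities `pw, px, py, pz`. -/
def Gmap {K M : Type*} [Field K] [AddCommGroup M] [Module K M]
    (mul : M →ₗ[K] M →ₗ[K] M) (α : M →ₗ[K] M)
    (pw px py pz : ZMod 2) (w x y z : M) : M :=
  homSuperJacobian mul α (pw + px) py pz (mul w x) (α y) (α z)
    - sgn K (px * pw) • mul (α (α x)) (homSuperJacobian mul α pw py pz w y z)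
    - sgn K (pw * (px + py + pz)) • mul (homSuperJacobian mul α px py pz x y z) (α (α w))

/-!
Expanding `G` and turning `J̃(x,y,z)·α²(w)` around by super anticommutativity reduces the claim
to an identity for the signed sum of the four terms `α²(t)·J̃(…)`, `t ∈ {w, x, y, z}`.
The Hom-Malcev identity writes twice each of these as three Jacobians `J̃(α a, α b, c·d)`.
Up to sign, by super anticommutativity in the first two slots and inside the product `c·d`,
only six such Jacobians occur; four of them cancel in pairs, and the other two, brought back by
cyclic symmetry, give `2 J̃(y·z, α w, α x) - 2 J̃(w·x, α y, α z)`. Dividing by `2` concludes.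
All sign bookkeeping is checked parity by parity.
-/

theorem ZMod.eq_zero_or_one_of_two (a : ZMod 2) : a = 0 ∨ a = 1 := by
  decide +revert

theorem sgn_zero (K : Type*) [Field K] : sgn K 0 = 1 := pow_zero _

theorem sgn_one (K : Type*) [Field K] : sgn K 1 = -1 := pow_one _

theorem sgn_mul_self (K : Type*) [Field K] (i : ZMod 2) : sgn K i * sgn K i = 1 := by
  rcases i.eq_zero_or_one_of_two with rfl | rfl <;> simp [sgn_zero, sgn_one]

section

variable {K M : Type*} [Field K] [AddCommGroup M] [Module K M]

def IsSuperAnticomm (A : ZMod 2 → Submodule K M) (mul : M →ₗ[K] M →ₗ[K] M) : Prop :=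
  ∀ i j : ZMod 2, ∀ x ∈ A i, ∀ y ∈ A j, mul x y = -(sgn K (i * j) • mul y x)

def IsHomMalcev (A : ZMod 2 → Submodule K M) (mul : M →ₗ[K] M →ₗ[K] M) (α : M →ₗ[K] M) :
    Prop :=
  ∀ pt px py pz : ZMod 2, ∀ t ∈ A pt, ∀ x ∈ A px, ∀ y ∈ A py, ∀ z ∈ A pz,
    (2 : K) • mul (α (α t)) (homSuperJacobian mul α px py pz x y z) =
      homSuperJacobian mul α pt px (py + pz) (α t) (α x) (mul y z)
        + sgn K (px * (py + pz)) •
            homSuperJacobian mul α pt py (pz + px) (α t) (α y) (mul z x)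
        + sgn K (pz * (px + py)) •
            homSuperJacobian mul α pt pz (px + py) (α t) (α z) (mul x y)

variable {A : ZMod 2 → Submodule K M} {mul : M →ₗ[K] M →ₗ[K] M} (α : M →ₗ[K] M)

theorem homSuperJacobian_mem
    (hmul_even : ∀ i j : ZMod 2, ∀ x ∈ A i, ∀ y ∈ A j, mul x y ∈ A (i + j))
    (hα_even : ∀ i : ZMod 2, ∀ x ∈ A i, α x ∈ A i) {i j k : ZMod 2} {x y z : M}
    (hx : x ∈ A i) (hy : y ∈ A j) (hz : z ∈ A k) :
    homSuperJacobian mul α i j k x y z ∈ A (i + j + k) := by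
  have hyzx := hmul_even _ _ _ (hmul_even _ _ _ hy _ hz) _ (hα_even _ _ hx)
  have hzxy := hmul_even _ _ _ (hmul_even _ _ _ hz _ hx) _ (hα_even _ _ hy)
  rw [show j + k + i = i + j + k by ring] at hyzx
  rw [show k + i + j = i + j + k by ring] at hzxy
  exact add_mem (add_mem (hmul_even _ _ _ (hmul_even _ _ _ hx _ hy) _ (hα_even _ _ hz))
    (Submodule.smul_mem _ _ hyzx)) (Submodule.smul_mem _ _ hzxy)

theorem homSuperJacobian_cycle (i j k : ZMod 2) (x y z : M) :
    homSuperJacobian mul α i j k x y z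
      = sgn K (i * (j + k)) • homSuperJacobian mul α j k i y z x := by
  simp only [homSuperJacobian]
  match_scalars <;>
    rcases i.eq_zero_or_one_of_two with rfl | rfl <;>
    rcases j.eq_zero_or_one_of_two with rfl | rfl <;>
    rcases k.eq_zero_or_one_of_two with rfl | rfl <;>
    simp [sgn_zero, sgn_one, CharTwo.add_self_eq_zero]

theorem homSuperJacobian_swap (hanti : IsSuperAnticomm A mul) {i j : ZMod 2} (k : ZMod 2)
    {x y z : M} (hx : x ∈ A i) (hy : y ∈ A j) (hz : z ∈ A k) :
    homSuperJacobian mul α j i k y x z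
      = -(sgn K (i * j) • homSuperJacobian mul α i j k x y z) := by
  simp only [homSuperJacobian]
  rw [hanti j i y hy x hx, hanti i k x hx z hz, hanti k j z hz y hy]
  simp only [map_neg, map_smul, LinearMap.neg_apply, LinearMap.smul_apply]
  match_scalars <;>
    rcases i.eq_zero_or_one_of_two with rfl | rfl <;>
    rcases j.eq_zero_or_one_of_two with rfl | rfl <;>
    rcases k.eq_zero_or_one_of_two with rfl | rfl <;>
    simp [sgn_zero, sgn_one, CharTwo.add_self_eq_zero]

theorem homSuperJacobian_mul_comm (hanti : IsSuperAnticomm A mul) (i j k : ZMod 2) (x y : M)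
    {a b : ZMod 2} {u v : M} (hu : u ∈ A a) (hv : v ∈ A b) :
    homSuperJacobian mul α i j k x y (mul u v)
      = -(sgn K (a * b) • homSuperJacobian mul α i j k x y (mul v u)) := by
  simp only [homSuperJacobian, hanti a b u hu v hv, map_neg, map_smul, LinearMap.neg_apply,
    LinearMap.smul_apply]
  module

theorem homSuperJacobian_swap_mul_comm
    (hmul_even : ∀ i j : ZMod 2, ∀ x ∈ A i, ∀ y ∈ A j, mul x y ∈ A (i + j))
    (hanti : IsSuperAnticomm A mul) {i j a b : ZMod 2} {x y u v : M}
    (hx : x ∈ A i) (hy : y ∈ A j) (hu : u ∈ A a) (hv : v ∈ A b) :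
    homSuperJacobian mul α j i (a + b) y x (mul u v)
      = (sgn K (i * j) * sgn K (a * b)) • homSuperJacobian mul α i j (b + a) x y (mul v u) := by
  rw [homSuperJacobian_swap α hanti _ hx hy (hmul_even _ _ _ hu _ hv),
    homSuperJacobian_mul_comm α hanti _ _ _ _ _ hu hv, add_comm a b]
  module

theorem IsHomMalcev.alternating_sum_mul_homSuperJacobian [NeZero (2 : K)]
    (hmul_even : ∀ i j : ZMod 2, ∀ x ∈ A i, ∀ y ∈ A j, mul x y ∈ A (i + j))
    (hα_even : ∀ i : ZMod 2, ∀ x ∈ A i, α x ∈ A i) (hanti : IsSuperAnticomm A mul)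
    (hmalcev : IsHomMalcev A mul α) {pw px py pz : ZMod 2} {w x y z : M}
    (hw : w ∈ A pw) (hx : x ∈ A px) (hy : y ∈ A py) (hz : z ∈ A pz) :
    mul (α (α w)) (homSuperJacobian mul α px py pz x y z)
        - sgn K (px * pw) • mul (α (α x)) (homSuperJacobian mul α pw py pz w y z)
        - sgn K ((py + pz) * (px + pw)) • mul (α (α y)) (homSuperJacobian mul α pz pw px z w x)
        + sgn K (pz * (px + py + pw)) • mul (α (α z)) (homSuperJacobian mul α pw px py w x y) =
      sgn K ((px + pw) * (py + pz)) •
          homSuperJacobian mul α (py + pz) pw px (mul y z) (α w) (α x)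
        - homSuperJacobian mul α (pw + px) py pz (mul w x) (α y) (α z) := by
  have hαw := hα_even _ _ hw
  have hαx := hα_even _ _ hx
  have hαy := hα_even _ _ hy
  have hαz := hα_even _ _ hz
  have hW := hmalcev pw px py pz w hw x hx y hy z hz
  have hX := hmalcev px pw py pz x hx w hw y hy z hz
  have hY := hmalcev py pz pw px y hy z hz w hw x hx
  have hZ := hmalcev pz pw px py z hz w hw x hx y hy
  -- bring every Jacobian to one of `J̃(α a, α b, c·d)` with `(a, b)` in the order `w, x, y, z`
  rw [homSuperJacobian_swap α hanti _ hαw hαx (hmul_even _ _ _ hy _ hz)] at hX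
  rw [homSuperJacobian_swap_mul_comm α hmul_even hanti hαw hαy hx hz,
    homSuperJacobian_swap α hanti _ hαx hαy (hmul_even _ _ _ hz _ hw)] at hY
  rw [homSuperJacobian_swap α hanti _ hαw hαz (hmul_even _ _ _ hx _ hy),
    homSuperJacobian_swap_mul_comm α hmul_even hanti hαx hαz hy hw,
    homSuperJacobian_swap α hanti _ hαy hαz (hmul_even _ _ _ hw _ hx)] at hZ
  rw [homSuperJacobian_cycle α (py + pz), homSuperJacobian_cycle α (pw + px)]
  apply smul_right_injective M (two_ne_zero : (2 : K) ≠ 0)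
  linear_combination (norm := skip) hW - sgn K (px * pw) • hX
    - sgn K ((py + pz) * (px + pw)) • hY + sgn K (pz * (px + py + pw)) • hZ
  match_scalars <;>
    rcases pw.eq_zero_or_one_of_two with rfl | rfl <;>
    rcases px.eq_zero_or_one_of_two with rfl | rfl <;>
    rcases py.eq_zero_or_one_of_two with rfl | rfl <;>
    rcases pz.eq_zero_or_one_of_two with rfl | rfl <;>
    simp [sgn_zero, sgn_one, CharTwo.add_self_eq_zero] <;> norm_num

end

theorem stmt8_general
    {K M : Type*} [Field K] [CharZero K] [AddCommGroup M] [Module K M]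
    (A : ZMod 2 → Submodule K M)
    (mul : M →ₗ[K] M →ₗ[K] M) (α : M →ₗ[K] M)
    (hmul_even : ∀ i j : ZMod 2, ∀ x ∈ A i, ∀ y ∈ A j, mul x y ∈ A (i + j))
    (hα_even : ∀ i : ZMod 2, ∀ x ∈ A i, α x ∈ A i)
    (hanti : ∀ i j : ZMod 2, ∀ x ∈ A i, ∀ y ∈ A j,
      mul x y = -(sgn K (i * j) • mul y x))
    (hmalcev : ∀ pt px py pz : ZMod 2, ∀ t ∈ A pt, ∀ x ∈ A px, ∀ y ∈ A py, ∀ z ∈ A pz,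
      (2 : K) • mul (α (α t)) (homSuperJacobian mul α px py pz x y z) =
        homSuperJacobian mul α pt px (py + pz) (α t) (α x) (mul y z)
          + sgn K (px * (py + pz)) •
              homSuperJacobian mul α pt py (pz + px) (α t) (α y) (mul z x)
          + sgn K (pz * (px + py)) •
              homSuperJacobian mul α pt pz (px + py) (α t) (α z) (mul x y)) :
    ∀ pw px py pz : ZMod 2, ∀ w ∈ A pw, ∀ x ∈ A px, ∀ y ∈ A py, ∀ z ∈ A pz,
      (2 : K) • Gmap mul α pw px py pz w x y z
          - mul (α (α w)) (homSuperJacobian mul α px py pz x y z)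
          + sgn K (px * pw) • mul (α (α x)) (homSuperJacobian mul α pw py pz w y z)
          - sgn K ((py + pz) * (px + pw)) •
              mul (α (α y)) (homSuperJacobian mul α pz pw px z w x)
          + sgn K (pz * (px + py + pw)) •
              mul (α (α z)) (homSuperJacobian mul α pw px py w x y) =
        homSuperJacobian mul α (pw + px) py pz (mul w x) (α y) (α z)
          + sgn K ((px + pw) * (py + pz)) •
              homSuperJacobian mul α (py + pz) pw px (mul y z) (α w) (α x) := by
  intro pw px py pz w hw x hx y hy z hz
  have hJw : sgn K (pw * (px + py + pz)) •
      mul (homSuperJacobian mul α px py pz x y z) (α (α w))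
        = -mul (α (α w)) (homSuperJacobian mul α px py pz x y z) := by
    rw [hanti _ _ _ (homSuperJacobian_mem α hmul_even hα_even hx hy hz) _
      (hα_even _ _ (hα_even _ _ hw)), smul_neg, smul_smul, mul_comm (px + py + pz),
      sgn_mul_self, one_smul]
  have hsum := IsHomMalcev.alternating_sum_mul_homSuperJacobian α hmul_even hα_even hanti
    hmalcev hw hx hy hz
  rw [Gmap]
  linear_combination (norm := module) (-2 : K) • hJw + hsum

theorem stmt8
    {K M : Type*} [Field K] [CharZero K] [AddCommGroup M] [Module K M]
    (A : ZMod 2 → Submodule K M) (hA : DirectSum.IsInternal A)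
    (mul : M →ₗ[K] M →ₗ[K] M) (α : M →ₗ[K] M)
    (hmul_even : ∀ i j : ZMod 2, ∀ x ∈ A i, ∀ y ∈ A j, mul x y ∈ A (i + j))
    (hα_even : ∀ i : ZMod 2, ∀ x ∈ A i, α x ∈ A i)
    (hmult : ∀ x y : M, α (mul x y) = mul (α x) (α y))
    (hanti : ∀ i j : ZMod 2, ∀ x ∈ A i, ∀ y ∈ A j,
      mul x y = -(sgn K (i * j) • mul y x))
    (hmalcev : ∀ pt px py pz : ZMod 2, ∀ t ∈ A pt, ∀ x ∈ A px, ∀ y ∈ A py, ∀ z ∈ A pz,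
      (2 : K) • mul (α (α t)) (homSuperJacobian mul α px py pz x y z) =
        homSuperJacobian mul α pt px (py + pz) (α t) (α x) (mul y z)
          + sgn K (px * (py + pz)) •
              homSuperJacobian mul α pt py (pz + px) (α t) (α y) (mul z x)
          + sgn K (pz * (px + py)) •
              homSuperJacobian mul α pt pz (px + py) (α t) (α z) (mul x y)) :
    ∀ pw px py pz : ZMod 2, ∀ w ∈ A pw, ∀ x ∈ A px, ∀ y ∈ A py, ∀ z ∈ A pz,
      (2 : K) • Gmap mul α pw px py pz w x y z
          - mul (α (α w)) (homSuperJacobian mul α px py pz x y z)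
          + sgn K (px * pw) • mul (α (α x)) (homSuperJacobian mul α pw py pz w y z)
          - sgn K ((py + pz) * (px + pw)) •
              mul (α (α y)) (homSuperJacobian mul α pz pw px z w x)
          + sgn K (pz * (px + py + pw)) •
              mul (α (α z)) (homSuperJacobian mul α pw px py w x y) =
        homSuperJacobian mul α (pw + px) py pz (mul w x) (α y) (α z)
          + sgn K ((px + pw) * (py + pz)) •
              homSuperJacobian mul α (py + pz) pw px (mul y z) (α w) (α x) :=
  stmt8_general A mul α hmul_even hα_even hanti hmalcev
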